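/- Let V be a symmetric positive definite real p×p matrix, μ ∈ ℝ^p, α > 0, and M any real k×p matrix. Then the function t ↦ φ_{μ,V}(t)^α · M V^{−1} (t − μ) is bounded on ℝ^p (its Euclidean norm admits a finite uniform upper bound). Consequently the influence function of the MDPDE fixed-effects functional T_α^β, IF_{i0}(t) = (X'ᵀX')^{−1} X_{i0}ᵀ V_{i0}^{−1}(t − X_{i0}β) φ(t;θ)^α, is bounded in t for every α > 0, i.e., the MDPDE of β is B-robust. -/

import Mathlib

/-!
Write `W = V⁻¹ = Bᵀ B`, which is possible since `W` is positive semidefinite, and `y = B (t - μ)`.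
Then `φ_{μ,V}(t)^α` is a constant times `exp (-(α/2) |y|²)`, while `M V⁻¹ (t - μ) = (M Bᵀ) y` has
norm at most a constant times `|y|`. So the whole expression is bounded by a constant times
`r exp (-(α/2) r²)` with `r = |y|`, and this is at most `1 / (2 √(α/2))` by AM-GM.
-/

open Matrix MeasureTheory

/-- The multivariate normal density `φ_{μ,V}(y)` on `ℝ^p`. -/
noncomputable def gaussianPdf {p : ℕ} (V : Matrix (Fin p) (Fin p) ℝ) (μ : Fin p → ℝ)
    (y : Fin p → ℝ) : ℝ :=
  (2 * Real.pi) ^ (-(p : ℝ) / 2) * V.det ^ (-(1 : ℝ) / 2) *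
    Real.exp (-(1 / 2 : ℝ) * ((y - μ) ⬝ᵥ (V⁻¹ *ᵥ (y - μ))))

theorem mul_exp_neg_mul_sq_le {c : ℝ} (hc : 0 < c) (r : ℝ) :
    r * Real.exp (-(c * r ^ 2)) ≤ 1 / (2 * √c) := by
  have hsqrt : 0 < √c := Real.sqrt_pos.mpr hc
  -- AM-GM: `2 √c r ≤ 1 + c r² ≤ exp (c r²)`
  have hamgm : 2 * √c * r ≤ Real.exp (c * r ^ 2) := by
    have := Real.add_one_le_exp (c * r ^ 2)
    nlinarith [sq_nonneg (√c * r - 1), Real.sq_sqrt hc.le]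
  rw [le_div_iff₀ (by positivity)]
  calc r * Real.exp (-(c * r ^ 2)) * (2 * √c)
      = 2 * √c * r * Real.exp (-(c * r ^ 2)) := by ring
    _ ≤ Real.exp (c * r ^ 2) * Real.exp (-(c * r ^ 2)) := by gcongr
    _ = 1 := by rw [← Real.exp_add, add_neg_cancel, Real.exp_zero]

theorem norm_le_sqrt_dotProduct_self {n : Type*} [Fintype n] (y : n → ℝ) :
    ‖y‖ ≤ √(y ⬝ᵥ y) := by
  refine (pi_norm_le_iff_of_nonneg (Real.sqrt_nonneg _)).mpr fun i => ?_
  rw [Real.norm_eq_abs, ← Real.sqrt_sq_eq_abs]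
  refine Real.sqrt_le_sqrt ?_
  simpa [dotProduct, sq] using Finset.single_le_sum (f := fun j => y j * y j)
    (fun j _ => mul_self_nonneg (y j)) (Finset.mem_univ i)

theorem exists_norm_exp_neg_dotProduct_self_smul_mulVec_le {m n : Type*} [Fintype m]
    [Fintype n] (N : Matrix m n ℝ) {c : ℝ} (hc : 0 < c) :
    ∃ C : ℝ, ∀ y : n → ℝ, ‖Real.exp (-(c * (y ⬝ᵥ y))) • (N *ᵥ y)‖ ≤ C := by
  set f := LinearMap.toContinuousLinearMap (Matrix.mulVecLin N)
  refine ⟨‖f‖ * (1 / (2 * √c)), fun y => ?_⟩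
  set r := √(y ⬝ᵥ y)
  have hr : r ^ 2 = y ⬝ᵥ y := Real.sq_sqrt (dotProduct_self_star_nonneg y)
  calc ‖Real.exp (-(c * (y ⬝ᵥ y))) • (N *ᵥ y)‖
      = Real.exp (-(c * r ^ 2)) * ‖f y‖ := by
        rw [norm_smul, Real.norm_of_nonneg (Real.exp_pos _).le, hr]; rfl
    _ ≤ Real.exp (-(c * r ^ 2)) * (‖f‖ * r) := by
        gcongr
        exact (f.le_opNorm y).trans (by gcongr; exact norm_le_sqrt_dotProduct_self y)
    _ = ‖f‖ * (r * Real.exp (-(c * r ^ 2))) := by ring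
    _ ≤ ‖f‖ * (1 / (2 * √c)) := by gcongr; exact mul_exp_neg_mul_sq_le hc r

open MatrixOrder in
theorem Matrix.PosSemidef.exists_norm_exp_neg_quadForm_smul_mulVec_le {m n : Type*}
    [Fintype m] [Fintype n] {W : Matrix n n ℝ} (hW : W.PosSemidef) (N : Matrix m n ℝ)
    {c : ℝ} (hc : 0 < c) :
    ∃ C : ℝ, ∀ x : n → ℝ, ‖Real.exp (-(c * (x ⬝ᵥ (W *ᵥ x)))) • (N *ᵥ (W *ᵥ x))‖ ≤ C := by
  classical
  obtain ⟨B, rfl⟩ := CStarAlgebra.nonneg_iff_eq_star_mul_self.mp hW.nonneg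
  obtain ⟨C, hC⟩ := exists_norm_exp_neg_dotProduct_self_smul_mulVec_le (N * Bᵀ) hc
  refine ⟨C, fun x => ?_⟩
  have hquad : x ⬝ᵥ ((star B * B) *ᵥ x) = B *ᵥ x ⬝ᵥ B *ᵥ x := by
    rw [star_eq_conjTranspose, conjTranspose_eq_transpose_of_trivial, ← mulVec_mulVec,
      dotProduct_mulVec, vecMul_transpose]
  have hlin : N *ᵥ ((star B * B) *ᵥ x) = (N * Bᵀ) *ᵥ (B *ᵥ x) := by
    rw [star_eq_conjTranspose, conjTranspose_eq_transpose_of_trivial, mulVec_mulVec,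
      mulVec_mulVec, Matrix.mul_assoc]
  rw [hquad, hlin]
  exact hC (B *ᵥ x)

theorem gaussianPdf_rpow {p : ℕ} {V : Matrix (Fin p) (Fin p) ℝ} (hV : 0 ≤ V.det)
    (μ t : Fin p → ℝ) (α : ℝ) :
    gaussianPdf V μ t ^ α = ((2 * Real.pi) ^ (-(p : ℝ) / 2) * V.det ^ (-(1 : ℝ) / 2)) ^ α *
      Real.exp (-(α / 2 * ((t - μ) ⬝ᵥ (V⁻¹ *ᵥ (t - μ))))) := by
  rw [gaussianPdf, Real.mul_rpow (by positivity) (Real.exp_pos _).le,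
    ← Real.exp_mul]
  ring_nf

theorem mdpde_beta_influence_bounded_general {p k : ℕ}
    (V : Matrix (Fin p) (Fin p) ℝ) (hVpd : V.PosDef)
    (μ : Fin p → ℝ) (α : ℝ) (hα : 0 < α) (M : Matrix (Fin k) (Fin p) ℝ) :
    ∃ C : ℝ, ∀ t : Fin p → ℝ,
      ‖gaussianPdf V μ t ^ α • (M *ᵥ (V⁻¹ *ᵥ (t - μ)))‖ ≤ C := by
  obtain ⟨C, hC⟩ := hVpd.inv.posSemidef.exists_norm_exp_neg_quadForm_smul_mulVec_le M
    (half_pos hα)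
  refine ⟨((2 * Real.pi) ^ (-(p : ℝ) / 2) * V.det ^ (-(1 : ℝ) / 2)) ^ α * C, fun t => ?_⟩
  have hdet : 0 ≤ V.det := hVpd.det_pos.le
  rw [gaussianPdf_rpow hdet, mul_smul, norm_smul, Real.norm_of_nonneg (by positivity)]
  gcongr
  exact hC (t - μ)

/-- for every `α > 0` and any `k×p` matrix `M`, the function
`t ↦ φ_{μ,V}(t)^α · M V⁻¹ (t − μ)` is bounded on `ℝ^p`; hence the influence function of
the MDPDE fixed-effects functional `T_α^β` is bounded in the contamination point, i.e.
the MDPDE of `β` is B-robust for `α > 0`. -/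
theorem mdpde_beta_influence_bounded {p k : ℕ}
    (V : Matrix (Fin p) (Fin p) ℝ) (hVsymm : V.IsSymm) (hVpd : V.PosDef)
    (μ : Fin p → ℝ) (α : ℝ) (hα : 0 < α) (M : Matrix (Fin k) (Fin p) ℝ) :
    ∃ C : ℝ, ∀ t : Fin p → ℝ,
      ‖gaussianPdf V μ t ^ α • (M *ᵥ (V⁻¹ *ᵥ (t - μ)))‖ ≤ C :=
  mdpde_beta_influence_bounded_general V hVpd μ α hα M
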